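/- arXiv:2602.14994 — 2 statements merged into one kernel-verified Lean document; each statement's English description precedes it below -/
import Mathlib

section
/- Equivalence of the two definitions of primary cause: define PrimCause' (via contribution) of φ as a pair (a, p) such that for the achievement index k of φ: p < k, ¬φ at the index of p, and (a,p) is a direct cause of some context γᵢ in the prefix up to k; define CausesDirPrim (foundational) as a pair (a,p) that is a direct cause of some context γⱼ in the prefix up to k. Then under mutual exclusivity of contexts and uniqueness of the achievement index, any pair satisfying PrimCause' and any pair satisfying CausesDirPrim coincide: a₁ = a₂ and p₁ = p₂. -/
/-- `k` is the achievement index of `φ` up to `n`. -/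
def AchvIdx (φ : ℕ → Prop) (n k : ℕ) : Prop :=
  (∀ j, k ≤ j → j ≤ n → φ j) ∧ ∀ k' < k, ¬ (∀ j, k' ≤ j → j ≤ n → φ j)

/-- Position `p` is a direct cause of context `γ i` in the prefix up to `k`. -/
def DirCauseCtx {m : ℕ} (γ : Fin m → ℕ → Prop) (i : Fin m) (p k : ℕ) : Prop :=
  p < k ∧ ¬ γ i p ∧ ∀ j, p < j → j ≤ k → γ i j

namespace DirCauseCtx

variable {m : ℕ} {γ : Fin m → ℕ → Prop} {i j : Fin m} {p q k : ℕ}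

theorem holds_at_end (h : DirCauseCtx γ i p k) : γ i k :=
  h.2.2 k h.1 le_rfl

theorem pos_unique (hp : DirCauseCtx γ i p k) (hq : DirCauseCtx γ i q k) : p = q := by
  rcases lt_trichotomy p q with hlt | heq | hgt
  · exact absurd (hp.2.2 q hlt hq.1.le) hq.2.1
  · exact heq
  · exact absurd (hq.2.2 p hgt hp.1.le) hp.2.1

theorem ctx_unique (mutex : ∀ i j l, γ i l → γ j l → i = j)
    (hp : DirCauseCtx γ i p k) (hq : DirCauseCtx γ j q k) : i = j :=
  mutex i j k hp.holds_at_end hq.holds_at_end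

theorem pos_unique_of_mutex (mutex : ∀ i j l, γ i l → γ j l → i = j)
    (hp : DirCauseCtx γ i p k) (hq : DirCauseCtx γ j q k) : p = q := by
  obtain rfl := ctx_unique mutex hp hq
  exact pos_unique hp hq

end DirCauseCtx

theorem prim_cause_defs_equivalent_general {A : Type*} {m : ℕ} (s : List A)
    (φ : ℕ → Prop) (γ : Fin m → ℕ → Prop)
    (mutex : ∀ i j l, γ i l → γ j l → i = j)
    (k : ℕ)
    (a₁ a₂ : A) (p₁ p₂ : ℕ)
    -- PrimCause' (via contribution)
    (h₁ : ¬ φ p₁ ∧ s[p₁]? = some a₁ ∧ ∃ i, DirCauseCtx γ i p₁ k)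
    -- CausesDirPrim (foundational)
    (h₂ : s[p₂]? = some a₂ ∧ ∃ j, DirCauseCtx γ j p₂ k) :
    a₁ = a₂ ∧ p₁ = p₂ := by
  obtain ⟨-, hs₁, i, hc₁⟩ := h₁
  obtain ⟨hs₂, j, hc₂⟩ := h₂
  obtain rfl := DirCauseCtx.pos_unique_of_mutex mutex hc₁ hc₂
  exact ⟨Option.some_inj.mp (hs₁.symm.trans hs₂), rfl⟩

theorem prim_cause_defs_equivalent {A : Type*} {m : ℕ} (s : List A) (n : ℕ)
    (φ : ℕ → Prop) (γ : Fin m → ℕ → Prop)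
    (mutex : ∀ i j l, γ i l → γ j l → i = j)
    (k : ℕ) (hach : AchvIdx φ n k)
    (a₁ a₂ : A) (p₁ p₂ : ℕ)
    -- PrimCause' (via contribution)
    (h₁ : ¬ φ p₁ ∧ s[p₁]? = some a₁ ∧ ∃ i, DirCauseCtx γ i p₁ k)
    -- CausesDirPrim (foundational)
    (h₂ : s[p₂]? = some a₂ ∧ ∃ j, DirCauseCtx γ j p₂ k) :
    a₁ = a₂ ∧ p₁ = p₂ :=
  prim_cause_defs_equivalent_general s φ γ mutex k a₁ a₂ p₁ p₂ h₁ h₂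
end

section
/- Failure of the naive but-for test (existence of preemption): there exists a transition system with a fluent F, a scenario s in which an action a at position p is the (unique) cause of F holding at the end of s, and a counterfactual executable scenario s' obtained from s by replacing a at p with a noOp, such that F still holds at the end of s'. -/
/-! The state records whether a rupture has happened and the only real action is `rupture`
(`true`; `false` is `noOp`). Once ruptured, the system stays ruptured, so in the scenario
`[rupture, rupture]` the first rupture is the direct cause of `F`; deleting it changes
nothing, because the second rupture, now unpreempted, brings `F` about on its own. -/

theorem foldl_or_eq_true_iff (l : List Bool) (σ : Bool) :
    l.foldl (fun σ b => b || σ) σ = true ↔ σ = true ∨ true ∈ l := by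
  induction l generalizing σ with
  | nil => simp
  | cons b l ih => cases b <;> simp [ih]

/-- Failure of the naive but-for test: there exists a transition system, a
scenario `s` in which `a` at position `p` is the direct cause of `F` at the
end of `s`, and an executable counterfactual scenario `s.set p noOp` in which
`F` still holds at the end. -/
theorem naive_but_for_fails :
    ∃ (State Action : Type) (noOp : Action)
      (Poss : Action → State → Prop) (step : Action → State → State)
      (init : State) (F : State → Prop) (s : List Action) (p : ℕ) (a : Action),
      (∀ σ, Poss noOp σ) ∧
      (∀ σ, step noOp σ = σ) ∧
      -- the scenario s is executable
      (∀ i, ∀ hi : i < s.length,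
        Poss (s.get ⟨i, hi⟩) ((s.take i).foldl (fun σ b => step b σ) init)) ∧
      -- a at position p is the direct cause of F in s
      p < s.length ∧ s[p]? = some a ∧
      ¬ F ((s.take p).foldl (fun σ b => step b σ) init) ∧
      (∀ j, p < j → j ≤ s.length → F ((s.take j).foldl (fun σ b => step b σ) init)) ∧
      -- the counterfactual scenario (a at p replaced by noOp) is executable
      (∀ i, ∀ hi : i < (s.set p noOp).length,
        Poss ((s.set p noOp).get ⟨i, hi⟩)
          (((s.set p noOp).take i).foldl (fun σ b => step b σ) init)) ∧
      -- and F still holds at the end of the counterfactual scenario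
      F ((s.set p noOp).foldl (fun σ b => step b σ) init) := by
  refine ⟨Bool, Bool, false, fun _ _ => True, fun b σ => b || σ, false, (· = true),
    [true, true], 0, true, fun _ => trivial, fun _ => rfl, fun _ _ => trivial, by simp, rfl,
    ?_, ?_, fun _ _ => trivial, ?_⟩
  · simp
  · intro j hj _
    rw [foldl_or_eq_true_iff]
    obtain ⟨k, rfl⟩ := Nat.exists_eq_add_of_lt hj
    simp
  · simp
end
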